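/- The energy not supplied admits the flow-based representation ENS = Σ_{(i,j) ∈ A} (l̃_i − l̃_j) f_{ij} + Σ_{i ∈ V} l̃_i θ_i, where ENS = Σ_{i ∈ V} l_i u_i. -/

import Mathlib

open scoped Classical BigOperators

/-- A finite arborescence: every node has a parent, the root is its own parent,
and every node reaches the root by iterating `parent`.  The arcs of the tree are
the pairs `(parent j, j)` for non-root `j`. -/
structure Arbor (V : Type*) where
  root : V
  parent : V → V
  parent_root : parent root = root
  reaches_root : ∀ v : V, ∃ n : ℕ, parent^[n] v = root

variable {V : Type*}

/-- `T.desc j i` : node `i` belongs to the subtree rooted at `j`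
(equivalently, `j` lies on the directed path from the root to `i`). -/
def Arbor.desc (T : Arbor V) (j i : V) : Prop := ∃ n : ℕ, T.parent^[n] i = j

/-- The children of node `i`. -/
noncomputable def Arbor.children [Fintype V] (T : Arbor V) (i : V) : Finset V :=
  Finset.univ.filter fun j => j ≠ T.root ∧ T.parent j = i

/-- The subtree rooted at `j`, as a finset (the set `V_j`). -/
noncomputable def Arbor.subtree [Fintype V] (T : Arbor V) (j : V) : Finset V :=
  Finset.univ.filter fun i => T.desc j i

/-- The node set of the unique directed path from the root to `j` (the set `path(0,j)`). -/
noncomputable def Arbor.pathSet [Fintype V] (T : Arbor V) (j : V) : Finset V :=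
  Finset.univ.filter fun i => T.desc i j

/-- The arcs of the tree, each arc `(parent j, j)` identified with its head `j ≠ root`. -/
noncomputable def Arbor.arcs [Fintype V] (T : Arbor V) : Finset V :=
  Finset.univ.filter fun j => j ≠ T.root

/-!
Writing `d j = u j - u (parent j)` for the increment of `u` along the arc into `j`, the value
`u i` is `u root` plus the increments along the path to `i`; exchanging the order of summation,
`Σ_i l_i u_i = l̃_root u_root + Σ_{arcs j} l̃_j d_j` (summation by parts on the tree).  For the
full interruptions, `d_j = θ̃_j - f_j`.  On the other side, the recursion for `θ̃` says
`θ_i = θ̃_i - Σ_{children j of i} f_j`, so `Σ_i l̃_i θ_i = Σ_i l̃_i θ̃_i - Σ_{arcs j} l̃_{parent j} f_j`,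
and the two expressions agree.
-/

namespace Arbor

variable (T : Arbor V)

lemma desc_iff_eq_or_desc_parent (j i : V) : T.desc j i ↔ j = i ∨ T.desc j (T.parent i) := by
  constructor
  · rintro ⟨_ | n, hn⟩
    · exact Or.inl hn.symm
    · exact Or.inr ⟨n, hn⟩
  · rintro (rfl | ⟨n, hn⟩)
    · exact ⟨0, rfl⟩
    · exact ⟨n + 1, hn⟩

lemma desc_root_iff (i : V) : T.desc i T.root ↔ i = T.root := by
  refine ⟨fun ⟨n, hn⟩ => ?_, fun h => ⟨0, h.symm⟩⟩
  rw [Function.iterate_fixed T.parent_root] at hn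
  exact hn.symm

lemma not_desc_parent {i : V} (hi : i ≠ T.root) : ¬ T.desc i (T.parent i) := by
  rintro ⟨n, hn⟩
  have hcycle : Function.IsPeriodicPt T.parent (n + 1) i := hn
  obtain ⟨m, hm⟩ := T.reaches_root i
  apply hi
  -- after `(n + 1) * m ≥ m` steps `i` is back at itself, but it has already reached the root
  calc i = T.parent^[(n + 1) * m] i := (hcycle.mul_const m).eq.symm
    _ = T.parent^[(n + 1) * m - m] (T.parent^[m] i) := by
        rw [← Function.iterate_add_apply, Nat.sub_add_cancel (Nat.le_mul_of_pos_left m n.succ_pos)]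
    _ = T.root := by rw [hm, Function.iterate_fixed T.parent_root]

variable [Fintype V]

lemma pathSet_eq_insert_pathSet_parent (i : V) :
    T.pathSet i = insert i (T.pathSet (T.parent i)) := by
  ext j
  simp [pathSet, T.desc_iff_eq_or_desc_parent j i]

lemma pathSet_root : T.pathSet T.root = {T.root} := by
  ext j
  simp [pathSet, T.desc_root_iff]

lemma subtree_root : T.subtree T.root = Finset.univ :=
  Finset.filter_true_of_mem fun i _ => T.reaches_root i

lemma sum_eq_add_sum_arcs {M : Type*} [AddCommMonoid M] (F : V → M) :
    ∑ i, F i = F T.root + ∑ j ∈ T.arcs, F j := by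
  rw [arcs, Finset.filter_ne', Finset.add_sum_erase _ _ (Finset.mem_univ _)]

lemma sum_sum_children {M : Type*} [AddCommMonoid M] (F : V → V → M) :
    ∑ i, ∑ j ∈ T.children i, F i j = ∑ j ∈ T.arcs, F (T.parent j) j := by
  have hchildren : ∀ i, T.children i = {j ∈ T.arcs | T.parent j = i} := fun i => by
    ext j
    simp [children, arcs]
  rw [← Finset.sum_fiberwise T.arcs T.parent]
  refine Finset.sum_congr rfl fun i _ => ?_
  rw [hchildren]
  exact Finset.sum_congr rfl fun j hj => by rw [(Finset.mem_filter.mp hj).2]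

lemma sum_sum_pathSet_erase_root {M : Type*} [AddCommMonoid M] (F : V → V → M) :
    ∑ i, ∑ j ∈ (T.pathSet i).erase T.root, F i j = ∑ j ∈ T.arcs, ∑ i ∈ T.subtree j, F i j :=
  Finset.sum_comm' (by intro i j; simp [pathSet, subtree, arcs, and_comm])

lemma sum_pathSet_erase_root_sub_parent {G : Type*} [AddCommGroup G] (u : V → G) (i : V) :
    ∑ j ∈ (T.pathSet i).erase T.root, (u j - u (T.parent j)) = u i - u T.root := by
  obtain ⟨n, hn⟩ := T.reaches_root i
  induction n generalizing i with
  | zero =>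
    subst hn
    simp [pathSet_root]
  | succ n ih =>
    by_cases hi : i = T.root
    · subst hi
      simp [pathSet_root]
    have hnot : i ∉ (T.pathSet (T.parent i)).erase T.root := fun h =>
      T.not_desc_parent hi (Finset.mem_filter.mp (Finset.mem_of_mem_erase h)).2
    rw [pathSet_eq_insert_pathSet_parent, Finset.erase_insert_of_ne hi, Finset.sum_insert hnot,
      ih (T.parent i) hn]
    abel

lemma sum_mul_eq_add_sum_arcs_mul_sub_parent {R : Type*} [CommRing R] (l u : V → R) :
    ∑ i, l i * u i = (∑ i, l i) * u T.root
      + ∑ j ∈ T.arcs, (∑ i ∈ T.subtree j, l i) * (u j - u (T.parent j)) := by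
  have hu : ∀ i, u i = u T.root + ∑ j ∈ (T.pathSet i).erase T.root, (u j - u (T.parent j)) :=
    fun i => by rw [sum_pathSet_erase_root_sub_parent]; ring
  simp_rw [Finset.sum_mul]
  rw [← sum_sum_pathSet_erase_root, ← Finset.sum_add_distrib]
  refine Finset.sum_congr rfl fun i _ => ?_
  rw [← Finset.mul_sum, ← mul_add, ← hu]

end Arbor

theorem ENS_flow_representation_general [Fintype V] (T : Arbor V) (As : V → Prop)
    (l lt θ θt f u : V → ℝ)
    (hlt : ∀ i, lt i = ∑ j ∈ T.subtree i, l j)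
    (hrec : ∀ i, θt i = θ i + ∑ j ∈ (T.children i).filter (fun j => ¬ As j), θt j)
    (hf : ∀ j, f j = if As j then 0 else θt j)
    (hu0 : u T.root = θt T.root)
    (hu : ∀ j, j ≠ T.root → u j = u (T.parent j) + (if As j then θt j else 0)) :
    ∑ i, l i * u i =
      (∑ j ∈ T.arcs, (lt (T.parent j) - lt j) * f j) + ∑ i, lt i * θ i := by
  have hθ_eq : ∀ i, θ i = θt i - ∑ j ∈ T.children i, f j := fun i => by
    simp only [hrec i, hf, Finset.sum_ite, Finset.sum_const_zero, zero_add]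
    ring
  have hENS : ∑ i, l i * u i = lt T.root * θt T.root + ∑ j ∈ T.arcs, lt j * (θt j - f j) := by
    rw [T.sum_mul_eq_add_sum_arcs_mul_sub_parent, ← T.subtree_root, ← hlt, hu0]
    refine congrArg _ (Finset.sum_congr rfl fun j hj => ?_)
    rw [hu j (Finset.mem_filter.mp hj).2, hf, hlt]
    split_ifs <;> ring
  have hθsum : ∑ i, lt i * θ i = ∑ i, lt i * θt i - ∑ j ∈ T.arcs, lt (T.parent j) * f j := by
    simp_rw [hθ_eq, mul_sub, Finset.sum_sub_distrib, Finset.mul_sum, T.sum_sum_children]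
  rw [hENS, hθsum, T.sum_eq_add_sum_arcs]
  simp only [mul_sub, sub_mul, Finset.sum_sub_distrib]
  ring

/-- flow-based representation of the energy not supplied:
`ENS = Σ_{(i,j) ∈ A} (l̃_i − l̃_j) f_{ij} + Σ_i l̃_i θ_i`. -/
theorem ENS_flow_representation [Fintype V] (T : Arbor V) (As : V → Prop)
    (l lt θ θt f u : V → ℝ)
    (hl : ∀ i, 0 ≤ l i)
    (hlt : ∀ i, lt i = ∑ j ∈ T.subtree i, l j)
    (hθ : ∀ i, 0 ≤ θ i)
    (hrec : ∀ i, θt i = θ i + ∑ j ∈ (T.children i).filter (fun j => ¬ As j), θt j)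
    (hf : ∀ j, f j = if As j then 0 else θt j)
    (hu0 : u T.root = θt T.root)
    (hu : ∀ j, j ≠ T.root → u j = u (T.parent j) + (if As j then θt j else 0)) :
    ∑ i, l i * u i =
      (∑ j ∈ T.arcs, (lt (T.parent j) - lt j) * f j) + ∑ i, lt i * θ i :=
  ENS_flow_representation_general T As l lt θ θt f u hlt hrec hf hu0 hu
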